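/- Let B be the backward shift on ℓ^p(ℕ, ω) with sup_k ω_{k+1}/ω_k < ∞ and sup_k ω_k/ω_{k+1} < ∞. If x ∈ ℓ^p(ℕ, ω) is non-zero and the projective orbit Orb(ℂx, B) = {λ B^n x : λ ∈ ℂ, n ∈ ℕ} has a non-zero limit point of the form a_0 e_0 + ⋯ + a_n e_n (a finitely supported vector), then x is a cyclic vector for B. -/

import Mathlib

/-!
Let `M` be the closure of the span of the orbit of `x`; it is closed and invariant under `B`.
By strong induction every unit vector `e i` lies in `M`. Once `e 0, …, e (i - 1)` do, erasing the
first `i` coordinates of `λₖ B^(mₖ - i) x` gives vectors of `M` that converge to `S^i y`, where `S`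
is the forward shift; this is where `ω (k + 1) ≤ C ω k` enters, as it makes `S` bounded. If `y n`
is the last non-zero coordinate of `y`, then `B^n S^i y` is `y n • e i` plus a combination of
`e 0, …, e (i - 1)`, so `e i ∈ M`. Finally every vector is the limit of its truncations, so `M` is
the whole space.
-/

open MeasureTheory Filter Topology
open scoped ENNReal

noncomputable section

/-- The weighted measure on the index set `I` giving the point `k` mass `(ω k) ^ p`,
so that `Lp ℂ p (wMeasure p ω)` is the weighted sequence space `ℓ^p(I, ω)`. -/
def wMeasure {I : Type*} [MeasurableSpace I] (p : ENNReal) (ω : I → ℝ) : Measure I :=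
  Measure.sum (fun k => ENNReal.ofReal ((ω k) ^ p.toReal) • Measure.dirac k)

theorem Submodule.pow_apply_mem_topologicalClosure_span_orbit {R E : Type*} [Semiring R]
    [TopologicalSpace E] [AddCommMonoid E] [Module R E] [ContinuousAdd E]
    [ContinuousConstSMul R E] (T : E →L[R] E) (x : E) (n : ℕ) {v : E}
    (hv : v ∈ (span R {w | ∃ j : ℕ, w = (T ^ j) x}).topologicalClosure) :
    (T ^ n) v ∈ (span R {w | ∃ j : ℕ, w = (T ^ j) x}).topologicalClosure := by
  set S := span R {w | ∃ j : ℕ, w = (T ^ j) x}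
  have hS : S ≤ S.topologicalClosure.comap ((T ^ n : E →L[R] E) : E →ₗ[R] E) := by
    rw [span_le]
    rintro _ ⟨j, rfl⟩
    exact S.le_topologicalClosure (subset_span ⟨n + j, by rw [pow_add]; rfl⟩)
  exact topologicalClosure_minimal _ hS
    (S.isClosed_topologicalClosure.preimage (T ^ n).continuous) hv

theorem Nat.exists_last_ne_zero {M : Type*} [Zero M] {y : ℕ → M} {N : ℕ} (hy : ∃ k, y k ≠ 0)
    (hN : ∀ k, N < k → y k = 0) : ∃ n, y n ≠ 0 ∧ ∀ k, n < k → y k = 0 := by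
  classical
  obtain ⟨k, hk⟩ := hy
  have hkN : k ≤ N := by
    by_contra h
    exact hk (hN k (by omega))
  refine ⟨Nat.findGreatest (fun k => y k ≠ 0) N,
    Nat.findGreatest_spec (P := fun k => y k ≠ 0) hkN hk, fun j hj => ?_⟩
  by_contra hne
  rcases le_or_gt j N with h | h
  · exact Nat.findGreatest_is_greatest hj h hne
  · exact hne (hN j h)

theorem ENNReal.tsum_eq_tsum_nat_add_of_eq_zero {F : ℕ → ℝ≥0∞} {n : ℕ}
    (hF : ∀ s < n, F s = 0) : ∑' s, F s = ∑' t, F (t + n) := by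
  rw [← ENNReal.summable.sum_add_tsum_nat_add' (k := n),
    Finset.sum_eq_zero fun s hs => hF s (Finset.mem_range.mp hs), zero_add]

namespace MeasureTheory

variable {α E : Type*} [MeasurableSpace α] {μ : Measure α} {p : ℝ≥0∞} [NormedAddCommGroup E]

theorem apply_of_ae_of_measure_singleton_ne_zero [Countable α] {P : α → Prop}
    (h : ∀ᵐ a ∂μ, P a) {a : α} (ha : μ {a} ≠ 0) : P a :=
  ae_iff_of_countable.1 h a ha

theorem Lp.exists_apply_ne_zero {f : Lp E p μ} (hf : f ≠ 0) : ∃ a, f a ≠ 0 := by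
  by_contra! h
  exact hf (Lp.ext (by filter_upwards [Lp.coeFn_zero E p μ] with a ha; rw [ha]; exact h a))

def Lp.evalₗ [Countable α] (𝕜 : Type*) [NormedRing 𝕜] [Module 𝕜 E] [IsBoundedSMul 𝕜 E]
    {a : α} (ha : μ {a} ≠ 0) : Lp E p μ →ₗ[𝕜] E where
  toFun f := f a
  map_add' f g := apply_of_ae_of_measure_singleton_ne_zero (Lp.coeFn_add f g) ha
  map_smul' c f := apply_of_ae_of_measure_singleton_ne_zero (Lp.coeFn_smul c f) ha

end MeasureTheory

section WeightedSpace

variable {I E : Type*} [MeasurableSpace I] [MeasurableSingletonClass I] [NormedAddCommGroup E]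
  {p : ℝ≥0∞} {ω : I → ℝ}

theorem wMeasure_singleton (k : I) : wMeasure p ω {k} = ENNReal.ofReal (ω k ^ p.toReal) := by
  rw [wMeasure, Measure.sum_apply _ (MeasurableSet.singleton k), tsum_eq_single k]
  · simp
  · intro j hj
    simp [hj]

theorem wMeasure_singleton_ne_zero (hω : ∀ k, 0 < ω k) (k : I) : wMeasure p ω {k} ≠ 0 := by
  rw [wMeasure_singleton]
  exact (ENNReal.ofReal_pos.mpr (Real.rpow_pos_of_pos (hω k) _)).ne'

theorem lintegral_wMeasure (g : I → ℝ≥0∞) :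
    ∫⁻ k, g k ∂(wMeasure p ω) = ∑' k, ENNReal.ofReal (ω k ^ p.toReal) * g k := by
  simp only [wMeasure, lintegral_sum_measure, lintegral_smul_measure, lintegral_dirac, smul_eq_mul]

def wSum (p : ℝ≥0∞) (ω : I → ℝ) (g : I → E) : ℝ≥0∞ :=
  ∑' k, ENNReal.ofReal (ω k ^ p.toReal) * ‖g k‖ₑ ^ p.toReal

theorem eLpNorm_wMeasure (hp0 : p ≠ 0) (hp : p ≠ ∞) (g : I → E) :
    eLpNorm g p (wMeasure p ω) = wSum p ω g ^ (1 / p.toReal) := by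
  rw [eLpNorm_eq_lintegral_rpow_enorm_toReal hp0 hp, lintegral_wMeasure, wSum]

theorem memLp_wMeasure_of_wSum_ne_top [Countable I] (hp0 : p ≠ 0) (hp : p ≠ ∞) {g : I → E}
    (h : wSum p ω g ≠ ∞) : MemLp g p (wMeasure p ω) :=
  ⟨.of_discrete, by
    rw [eLpNorm_wMeasure hp0 hp]
    exact ENNReal.rpow_lt_top_of_nonneg (by positivity) h⟩

theorem wSum_ne_top (hp0 : p ≠ 0) (hp : p ≠ ∞) (f : Lp E p (wMeasure p ω)) :
    wSum p ω f ≠ ∞ := by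
  have hf := Lp.eLpNorm_lt_top f
  rw [eLpNorm_wMeasure hp0 hp] at hf
  exact (ENNReal.rpow_lt_top_iff_of_pos (by
    have := ENNReal.toReal_pos hp0 hp; positivity)).1 hf |>.ne

theorem tendsto_wMeasure_iff [Fact (1 ≤ p)] (hp : p ≠ ∞) {ι : Type*} {l : Filter ι}
    {u : ι → Lp E p (wMeasure p ω)} {z : Lp E p (wMeasure p ω)} :
    Tendsto u l (𝓝 z) ↔ Tendsto (fun k => wSum p ω (⇑(u k) - ⇑z)) l (𝓝 0) := by
  have hp0 : p ≠ 0 := (zero_lt_one.trans_le Fact.out).ne'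
  have hq : 0 < p.toReal := ENNReal.toReal_pos hp0 hp
  have hedist k : edist (u k) z = wSum p ω (⇑(u k) - ⇑z) ^ (1 / p.toReal) := by
    rw [Lp.edist_def, eLpNorm_wMeasure hp0 hp]
  have hwSum k : wSum p ω (⇑(u k) - ⇑z) = edist (u k) z ^ p.toReal := by
    rw [hedist k, one_div, ENNReal.rpow_inv_rpow hq.ne']
  have hrpow {r : ℝ} (hr : 0 < r) {v : ι → ℝ≥0∞} (hv : Tendsto v l (𝓝 0)) :
      Tendsto (fun k => v k ^ r) l (𝓝 0) := by
    simpa [Function.comp_def, ENNReal.zero_rpow_of_pos hr] using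
      (ENNReal.continuous_rpow_const (y := r) |>.tendsto 0).comp hv
  rw [tendsto_iff_edist_tendsto_0]
  refine ⟨fun h => ?_, fun h => ?_⟩
  · simpa only [hwSum] using hrpow hq h
  · simpa only [hedist] using hrpow (by positivity) h

end WeightedSpace

def rightShift {E : Type*} [Zero E] (i : ℕ) (g : ℕ → E) : ℕ → E :=
  fun s => if i ≤ s then g (s - i) else 0

section Sequences

variable {E : Type*} [NormedAddCommGroup E] {p : ℝ≥0∞} {ω : ℕ → ℝ} {C : ℝ}

theorem weight_add_le (hω : ∀ k, 0 < ω k) (hC : ∀ k, ω (k + 1) / ω k ≤ C) (t j : ℕ) :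
    ω (t + j) ≤ C ^ j * ω t := by
  have hC0 : 0 ≤ C := (div_pos (hω 1) (hω 0)).le.trans (hC 0)
  induction j with
  | zero => simp
  | succ j ih =>
    calc ω (t + j + 1) ≤ C * ω (t + j) := (div_le_iff₀ (hω _)).1 (hC _)
      _ ≤ C * (C ^ j * ω t) := by gcongr
      _ = C ^ (j + 1) * ω t := by ring

theorem wSum_rightShift_le (hp0 : p ≠ 0) (hp : p ≠ ∞) (hω : ∀ k, 0 < ω k)
    (hC : ∀ k, ω (k + 1) / ω k ≤ C) (j : ℕ) (g : ℕ → E) :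
    wSum p ω (rightShift j g) ≤ ENNReal.ofReal ((C ^ j) ^ p.toReal) * wSum p ω g := by
  have hq : 0 < p.toReal := ENNReal.toReal_pos hp0 hp
  rw [wSum, wSum, ENNReal.tsum_eq_tsum_nat_add_of_eq_zero (n := j) fun s hs => by
    simp [rightShift, Nat.not_le.mpr hs, ENNReal.zero_rpow_of_pos hq]]
  simp only [rightShift, Nat.le_add_left, if_true, Nat.add_sub_cancel]
  rw [← ENNReal.tsum_mul_left]
  refine ENNReal.tsum_le_tsum fun t => ?_
  have hC0 : 0 ≤ C := (div_pos (hω 1) (hω 0)).le.trans (hC 0)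
  rw [← mul_assoc, ← ENNReal.ofReal_mul (by positivity), ← Real.mul_rpow (by positivity) (hω t).le]
  gcongr
  · exact (hω _).le
  · exact weight_add_le hω hC t j

theorem exists_apply_eq_rightShift (hp0 : p ≠ 0) (hp : p ≠ ∞) (hω : ∀ k, 0 < ω k)
    (hC : ∀ k, ω (k + 1) / ω k ≤ C) (i : ℕ) (f : Lp E p (wMeasure p ω)) :
    ∃ z : Lp E p (wMeasure p ω), ∀ s, z s = rightShift i f s := by
  have hf : MemLp (rightShift i f) p (wMeasure p ω) :=
    memLp_wMeasure_of_wSum_ne_top hp0 hp <| ne_top_of_le_ne_top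
      (ENNReal.mul_ne_top ENNReal.ofReal_ne_top (wSum_ne_top hp0 hp f))
      (wSum_rightShift_le hp0 hp hω hC i f)
  exact ⟨hf.toLp _, fun s => apply_of_ae_of_measure_singleton_ne_zero hf.coeFn_toLp
    (wMeasure_singleton_ne_zero hω s)⟩

def wBasis (p : ℝ≥0∞) (ω : ℕ → ℝ) (i : ℕ) : Lp ℂ p (wMeasure p ω) :=
  indicatorConstLp p (measurableSet_singleton i) (by simp [wMeasure_singleton]) 1

theorem wBasis_apply (hω : ∀ k, 0 < ω k) (i k : ℕ) : wBasis p ω i k = if k = i then 1 else 0 :=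
  (apply_of_ae_of_measure_singleton_ne_zero indicatorConstLp_coeFn
    (wMeasure_singleton_ne_zero hω k)).trans (by simp [Set.indicator])

theorem smul_apply_of_wMeasure (hω : ∀ k, 0 < ω k) (c : ℂ) (f : Lp ℂ p (wMeasure p ω)) (s : ℕ) :
    (c • f) s = c * f s :=
  map_smul (Lp.evalₗ ℂ (wMeasure_singleton_ne_zero hω s)) c f

def wTrunc (n : ℕ) (f : Lp ℂ p (wMeasure p ω)) : Lp ℂ p (wMeasure p ω) :=
  ∑ t ∈ Finset.range n, f t • wBasis p ω t

theorem wTrunc_apply (hω : ∀ k, 0 < ω k) (n : ℕ) (f : Lp ℂ p (wMeasure p ω)) (s : ℕ) :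
    wTrunc n f s = if s < n then f s else 0 := by
  change Lp.evalₗ ℂ (wMeasure_singleton_ne_zero hω s) (wTrunc n f) = _
  simp [wTrunc, Lp.evalₗ, wBasis_apply hω]

theorem sub_wTrunc_apply (hω : ∀ k, 0 < ω k) (n : ℕ) (f : Lp ℂ p (wMeasure p ω)) (s : ℕ) :
    (f - wTrunc n f) s = if s < n then 0 else f s := by
  change Lp.evalₗ ℂ (wMeasure_singleton_ne_zero hω s) (f - wTrunc n f) = _
  rw [map_sub]
  split_ifs with h <;> simp [Lp.evalₗ, wTrunc_apply hω, h]

theorem wTrunc_mem {M : Submodule ℂ (Lp ℂ p (wMeasure p ω))} {n : ℕ}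
    (h : ∀ t < n, wBasis p ω t ∈ M) (f : Lp ℂ p (wMeasure p ω)) : wTrunc n f ∈ M :=
  M.sum_mem fun t ht => M.smul_mem _ (h t (Finset.mem_range.1 ht))

theorem tendsto_wTrunc [Fact (1 ≤ p)] (hp : p ≠ ∞) (hω : ∀ k, 0 < ω k)
    (f : Lp ℂ p (wMeasure p ω)) : Tendsto (fun n => wTrunc n f) atTop (𝓝 f) := by
  have hp0 : p ≠ 0 := (zero_lt_one.trans_le Fact.out).ne'
  have hq : 0 < p.toReal := ENNReal.toReal_pos hp0 hp
  have htail n : wSum p ω (⇑(wTrunc n f) - ⇑f) =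
      ∑' t, ENNReal.ofReal (ω (t + n) ^ p.toReal) * ‖f (t + n)‖ₑ ^ p.toReal := by
    rw [wSum, ENNReal.tsum_eq_tsum_nat_add_of_eq_zero (n := n) fun s hs => by
      simp [wTrunc_apply hω, hs, ENNReal.zero_rpow_of_pos hq]]
    simp [wTrunc_apply hω]
  rw [tendsto_wMeasure_iff hp]
  simpa only [htail] using ENNReal.tendsto_sum_nat_add _ (wSum_ne_top hp0 hp f)

theorem eq_top_of_wBasis_mem [Fact (1 ≤ p)] (hp : p ≠ ∞) (hω : ∀ k, 0 < ω k)
    {M : Submodule ℂ (Lp ℂ p (wMeasure p ω))} (hM : IsClosed (M : Set (Lp ℂ p (wMeasure p ω))))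
    (h : ∀ i, wBasis p ω i ∈ M) : M = ⊤ :=
  eq_top_iff.2 fun f _ => hM.mem_of_tendsto (tendsto_wTrunc hp hω f)
    (Eventually.of_forall fun _ => wTrunc_mem (fun t _ => h t) f)

end Sequences

section BackwardShift

variable {p : ℝ≥0∞} [Fact (1 ≤ p)] {ω : ℕ → ℝ}
  {B : Lp ℂ p (wMeasure p ω) →L[ℂ] Lp ℂ p (wMeasure p ω)}

theorem pow_apply_of_shift (hB : ∀ (x : Lp ℂ p (wMeasure p ω)) (k : ℕ), B x k = x (k + 1))
    (j : ℕ) (z : Lp ℂ p (wMeasure p ω)) (k : ℕ) : (B ^ j) z k = z (j + k) := by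
  induction j generalizing z with
  | zero => simp
  | succ j ih =>
    rw [pow_succ]
    change (B ^ j) (B z) k = _
    rw [ih, hB]
    congr 1
    omega

theorem pow_sub_wTrunc_eq_smul_wBasis (hω : ∀ k, 0 < ω k)
    (hB : ∀ (x : Lp ℂ p (wMeasure p ω)) (k : ℕ), B x k = x (k + 1))
    {y : Lp ℂ p (wMeasure p ω)} {n : ℕ} (htop : ∀ k, n < k → y k = 0) {i : ℕ}
    {z : Lp ℂ p (wMeasure p ω)} (hz : ∀ s, z s = rightShift i y s) :
    (B ^ n) z - wTrunc i ((B ^ n) z) = y n • wBasis p ω i := by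
  refine Lp.ext (Eventually.of_forall fun s => ?_)
  rw [sub_wTrunc_apply hω, smul_apply_of_wMeasure hω, wBasis_apply hω, pow_apply_of_shift hB, hz,
    rightShift]
  rcases lt_trichotomy s i with hs | rfl | hs
  · simp [hs, hs.ne]
  · simp
  · simp [hs.not_gt, hs.ne', show i ≤ n + s by omega, htop (n + s - i) (by omega)]

variable {C : ℝ}

theorem rightShift_mem_of_tendsto (hp : p ≠ ∞) (hω : ∀ k, 0 < ω k)
    (hC : ∀ k, ω (k + 1) / ω k ≤ C)
    (hB : ∀ (x : Lp ℂ p (wMeasure p ω)) (k : ℕ), B x k = x (k + 1))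
    {M : Submodule ℂ (Lp ℂ p (wMeasure p ω))} (hM : IsClosed (M : Set (Lp ℂ p (wMeasure p ω))))
    {x : Lp ℂ p (wMeasure p ω)} (hxM : ∀ j, (B ^ j) x ∈ M)
    {lam : ℕ → ℂ} {m : ℕ → ℕ} (hm : StrictMono m) {y : Lp ℂ p (wMeasure p ω)}
    (hconv : Tendsto (fun k => lam k • (B ^ m k) x) atTop (𝓝 y))
    {i : ℕ} (hi : ∀ t < i, wBasis p ω t ∈ M)
    {z : Lp ℂ p (wMeasure p ω)} (hz : ∀ s, z s = rightShift i y s) : z ∈ M := by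
  have hp0 : p ≠ 0 := (zero_lt_one.trans_le Fact.out).ne'
  set u := fun k => lam k • (B ^ (m k - i)) x
  have hdiff : ∀ k ≥ i, ⇑(u k - wTrunc i (u k)) - ⇑z =
      rightShift i (⇑(lam k • (B ^ m k) x) - ⇑y) := by
    intro k hk
    have hmk : i ≤ m k := hk.trans hm.le_apply
    funext s
    simp only [Pi.sub_apply, sub_wTrunc_apply hω, hz, rightShift, u, smul_apply_of_wMeasure hω,
      pow_apply_of_shift hB]
    by_cases hs : s < i
    · simp [hs, Nat.not_le.mpr hs]
    · simp only [hs, if_false, not_lt.mp hs, if_true]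
      rw [show m k - i + s = m k + (s - i) by omega]
  have hu : Tendsto (fun k => u k - wTrunc i (u k)) atTop (𝓝 z) := by
    rw [tendsto_wMeasure_iff hp] at hconv ⊢
    have hbound := ENNReal.Tendsto.const_mul (a := ENNReal.ofReal ((C ^ i) ^ p.toReal)) hconv
      (Or.inr ENNReal.ofReal_ne_top)
    rw [mul_zero] at hbound
    refine tendsto_of_tendsto_of_tendsto_of_le_of_le' tendsto_const_nhds hbound
      (Eventually.of_forall fun _ => bot_le) ?_
    filter_upwards [eventually_ge_atTop i] with k hk
    rw [hdiff k hk]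
    exact wSum_rightShift_le hp0 hp hω hC i _
  exact hM.mem_of_tendsto hu
    (Eventually.of_forall fun k => M.sub_mem (M.smul_mem _ (hxM _)) (wTrunc_mem hi _))

end BackwardShift

theorem stmt10_general (p : ENNReal) [Fact (1 ≤ p)] (hp : p ≠ ∞) (ω : ℕ → ℝ) (hω : ∀ k, 0 < ω k)
    (hbdd' : ∃ C : ℝ, ∀ k, ω (k + 1) / ω k ≤ C)
    (B : Lp ℂ p (wMeasure p ω) →L[ℂ] Lp ℂ p (wMeasure p ω))
    (hB : ∀ (x : Lp ℂ p (wMeasure p ω)) (k : ℕ), B x k = x (k + 1))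
    (x : Lp ℂ p (wMeasure p ω))
    (lam : ℕ → ℂ) (m : ℕ → ℕ) (hm : StrictMono m)
    (y : Lp ℂ p (wMeasure p ω)) (hy : y ≠ 0)
    (N : ℕ) (hfin : ∀ k : ℕ, N < k → y k = 0)
    (hconv : Tendsto (fun k => lam k • (B ^ m k) x) atTop (nhds y)) :
    Dense (↑(Submodule.span ℂ {v : Lp ℂ p (wMeasure p ω) | ∃ j : ℕ, v = (B ^ j) x}) :
      Set (Lp ℂ p (wMeasure p ω))) := by
  obtain ⟨C, hC⟩ := hbdd'
  have hp0 : p ≠ 0 := (zero_lt_one.trans_le Fact.out).ne'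
  obtain ⟨n, hyn, htop⟩ := Nat.exists_last_ne_zero (Lp.exists_apply_ne_zero hy) hfin
  set S := Submodule.span ℂ {v : Lp ℂ p (wMeasure p ω) | ∃ j : ℕ, v = (B ^ j) x}
  set M := S.topologicalClosure
  have hxM j : (B ^ j) x ∈ M := S.le_topologicalClosure (Submodule.subset_span ⟨j, rfl⟩)
  have hbasis i : wBasis p ω i ∈ M := by
    induction i using Nat.strong_induction_on with
    | _ i ih =>
      obtain ⟨z, hz⟩ := exists_apply_eq_rightShift hp0 hp hω hC i y
      have hzM : z ∈ M :=
        rightShift_mem_of_tendsto hp hω hC hB S.isClosed_topologicalClosure hxM hm hconv ih hz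
      have hBz := M.sub_mem (Submodule.pow_apply_mem_topologicalClosure_span_orbit B x n hzM)
        (wTrunc_mem ih ((B ^ n) z))
      rw [pow_sub_wTrunc_eq_smul_wBasis hω hB htop hz] at hBz
      exact (M.smul_mem_iff hyn).1 hBz
  exact Submodule.dense_iff_topologicalClosure_eq_top.2
    (eq_top_of_wBasis_mem hp hω S.isClosed_topologicalClosure hbasis)

/-- if the projective orbit `{λ • B ^ n x : λ ∈ ℂ, n ∈ ℕ}` of a non-zero
vector `x` has a non-zero, finitely supported limit point, then `x` is cyclic for `B`. -/
theorem stmt10 (p : ENNReal) [Fact (1 ≤ p)] (hp : p ≠ ∞) (ω : ℕ → ℝ) (hω : ∀ k, 0 < ω k)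
    (hbdd : ∃ C : ℝ, ∀ k, ω k / ω (k + 1) ≤ C)
    (hbdd' : ∃ C : ℝ, ∀ k, ω (k + 1) / ω k ≤ C)
    (B : Lp ℂ p (wMeasure p ω) →L[ℂ] Lp ℂ p (wMeasure p ω))
    (hB : ∀ (x : Lp ℂ p (wMeasure p ω)) (k : ℕ), B x k = x (k + 1))
    (x : Lp ℂ p (wMeasure p ω)) (hx : x ≠ 0)
    (lam : ℕ → ℂ) (m : ℕ → ℕ) (hm : StrictMono m)
    (y : Lp ℂ p (wMeasure p ω)) (hy : y ≠ 0)
    (N : ℕ) (hfin : ∀ k : ℕ, N < k → y k = 0)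
    (hconv : Tendsto (fun k => lam k • (B ^ m k) x) atTop (nhds y)) :
    Dense (↑(Submodule.span ℂ {v : Lp ℂ p (wMeasure p ω) | ∃ j : ℕ, v = (B ^ j) x}) :
      Set (Lp ℂ p (wMeasure p ω))) :=
  stmt10_general p hp ω hω hbdd' B hB x lam m hm y hy N hfin hconv
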